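/- arXiv:1612.02519 — 5 statements merged into one kernel-verified Lean document; each statement's English description precedes it below -/
import Mathlib

section
/- Let n, γ, m ∈ ℕ, let f and h₁, …, h_m be real polynomials in n variables, and suppose x ∈ ℝⁿ satisfies hᵢ(x) ≥ 0 for all i. For each i let ηᵢ ∈ ℕ satisfy 2ηᵢ ≥ deg hᵢ and γ ≥ ηᵢ. Then the function y : (Fin n →₀ ℕ) → ℝ given by y(α) = x^α satisfies: (i) y(0) = 1; (ii) the order-γ moment matrix M_γ{y} is positive semidefinite; (iii) for every i the degree-(γ−ηᵢ) localizing matrix of y for hᵢ is positive semidefinite; and (iv) L_y{f} := Σ_α f_α·y(α) = f(x). Consequently, the optimal value of the order-γ moment relaxation is a lower bound on the optimal value of the original polynomial optimization problem min { f(x) : hᵢ(x) ≥ 0, i = 1,…,m }, and if the moment relaxation is infeasible then the original problem is infeasible. -/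
open Finset

/-- Exponent vectors (finitely supported functions `Fin n →₀ ℕ`) of total degree at most `γ`:
the index set of the order-`γ` moment matrix. -/
def MomIdx (n γ : ℕ) : Type := {α : Fin n →₀ ℕ // ∑ i, α i ≤ γ}

instance MomIdx.finite (n γ : ℕ) : Finite (MomIdx n γ) := by
  have hb : ∀ (p : MomIdx n γ) (i : Fin n), p.1 i < γ + 1 := by
    intro p i
    have h1 : p.1 i ≤ ∑ j, p.1 j :=
      Finset.single_le_sum (fun j _ => Nat.zero_le _) (Finset.mem_univ i)
    exact Nat.lt_succ_of_le (h1.trans p.2)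
  refine Finite.of_injective
    (fun p => (fun i => (⟨p.1 i, hb p i⟩ : Fin (γ + 1)) : Fin n → Fin (γ + 1))) ?_
  intro p q hpq
  apply Subtype.ext
  apply Finsupp.ext
  intro i
  simpa [Fin.mk.injEq] using congrFun hpq i

noncomputable instance MomIdx.fintype (n γ : ℕ) : Fintype (MomIdx n γ) :=
  Fintype.ofFinite _

/-- The order-`γ` moment matrix of `y`, with entries `y (α + β)` for `|α|, |β| ≤ γ`. -/
noncomputable def momentMatrix (n γ : ℕ) (y : (Fin n →₀ ℕ) → ℝ) :
    Matrix (MomIdx n γ) (MomIdx n γ) ℝ :=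
  Matrix.of fun a b => y (a.1 + b.1)

/-- The degree-`d` localizing matrix of `y` for the polynomial `h`, with entries
`∑ κ, h_κ * y (κ + α + β)` for `|α|, |β| ≤ d`. -/
noncomputable def localizingMatrix (n d : ℕ) (h : MvPolynomial (Fin n) ℝ)
    (y : (Fin n →₀ ℕ) → ℝ) : Matrix (MomIdx n d) (MomIdx n d) ℝ :=
  Matrix.of fun a b => ∑ κ ∈ h.support, h.coeff κ * y (κ + a.1 + b.1)


lemma psd_outer {ι : Type*} [Fintype ι] (c : ℝ) (hc : 0 ≤ c) (v : ι → ℝ) :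
    (Matrix.of fun a b => c * (v a * v b)).PosSemidef := by
  rw [Matrix.posSemidef_iff_dotProduct_mulVec]
  constructor
  · ext a b
    simp only [Matrix.conjTranspose_apply, Matrix.of_apply, star_trivial]
    ring
  · intro z
    have key : dotProduct (star z) ((Matrix.of fun a b => c * (v a * v b)).mulVec z)
        = c * (∑ i, v i * z i) ^ 2 := by
      simp only [dotProduct, Matrix.mulVec, Matrix.of_apply, star_trivial,
        Pi.star_apply]
      rw [sq, Finset.sum_mul_sum, Finset.mul_sum]
      refine Finset.sum_congr rfl fun a _ => ?_
      rw [Finset.mul_sum, Finset.mul_sum]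
      refine Finset.sum_congr rfl fun b _ => ?_
      ring
    rw [key]
    positivity

lemma prodpow_add {n : ℕ} (x : Fin n → ℝ) (a b : Fin n →₀ ℕ) :
    (∏ i, x i ^ ((a + b) i)) = (∏ i, x i ^ a i) * ∏ i, x i ^ b i := by
  simp [Finsupp.add_apply, pow_add, Finset.prod_mul_distrib]

lemma momentMatrix_psd (n γ : ℕ) (x : Fin n → ℝ) :
    (momentMatrix n γ (fun α => ∏ i, x i ^ α i)).PosSemidef := by
  have : momentMatrix n γ (fun α => ∏ i, x i ^ α i)
      = Matrix.of fun a b : MomIdx n γ =>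
          (1 : ℝ) * ((∏ i, x i ^ a.1 i) * (∏ i, x i ^ b.1 i)) := by
    ext a b
    simp [momentMatrix, pow_add, Finset.prod_mul_distrib]
  rw [this]
  exact psd_outer 1 zero_le_one _

lemma localizingMatrix_psd (n d : ℕ) (h : MvPolynomial (Fin n) ℝ) (x : Fin n → ℝ)
    (hh : 0 ≤ MvPolynomial.eval x h) :
    (localizingMatrix n d h (fun α => ∏ i, x i ^ α i)).PosSemidef := by
  have : localizingMatrix n d h (fun α => ∏ i, x i ^ α i)
      = Matrix.of fun a b : MomIdx n d =>
          (MvPolynomial.eval x h) * ((∏ i, x i ^ a.1 i) * (∏ i, x i ^ b.1 i)) := by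
    ext a b
    simp only [localizingMatrix, Matrix.of_apply]
    rw [MvPolynomial.eval_eq', Finset.sum_mul]
    refine Finset.sum_congr rfl fun κ _ => ?_
    rw [show κ + a.1 + b.1 = (κ + a.1) + b.1 from rfl, prodpow_add, prodpow_add]
    ring
  rw [this]
  exact psd_outer _ hh _

lemma Ly_eq_eval {n : ℕ} (f : MvPolynomial (Fin n) ℝ) (x : Fin n → ℝ) :
    (∑ α ∈ f.support, f.coeff α * ∏ i, x i ^ α i) = MvPolynomial.eval x f :=
  (MvPolynomial.eval_eq' x f).symm

/-- Any point `x` feasible for the polynomial optimization problem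
`min {f(x) : hᵢ(x) ≥ 0}` gives rise to a feasible point `y α = x^α` of the order-`γ` moment
relaxation with matching objective value `L_y{f} = f(x)`.  Consequently the relaxation's optimal
value lower bounds the original optimal value, and infeasibility of the relaxation implies
infeasibility of the original problem. -/
theorem moment_relaxation_lower_bound (n γ m : ℕ)
    (f : MvPolynomial (Fin n) ℝ) (h : Fin m → MvPolynomial (Fin n) ℝ)
    (η : Fin m → ℕ)
    (hdeg : ∀ i, (h i).totalDegree ≤ 2 * η i)
    (hγη : ∀ i, η i ≤ γ)
    (x : Fin n → ℝ) (hx : ∀ i, 0 ≤ MvPolynomial.eval x (h i)) :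
    ((fun α : Fin n →₀ ℕ => ∏ i, x i ^ α i) 0 = 1 ∧
      (momentMatrix n γ (fun α => ∏ i, x i ^ α i)).PosSemidef ∧
      (∀ i, (localizingMatrix n (γ - η i) (h i) (fun α => ∏ j, x j ^ α j)).PosSemidef) ∧
      (∑ α ∈ f.support, f.coeff α * ∏ i, x i ^ α i) = MvPolynomial.eval x f) ∧
    sInf {v : EReal | ∃ y : (Fin n →₀ ℕ) → ℝ,
        y 0 = 1 ∧ (momentMatrix n γ y).PosSemidef ∧
        (∀ i, (localizingMatrix n (γ - η i) (h i) y).PosSemidef) ∧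
        v = ((∑ α ∈ f.support, f.coeff α * y α : ℝ) : EReal)} ≤
      sInf {v : EReal | ∃ x' : Fin n → ℝ,
        (∀ i, 0 ≤ MvPolynomial.eval x' (h i)) ∧
        v = ((MvPolynomial.eval x' f : ℝ) : EReal)} ∧
    ({y : (Fin n →₀ ℕ) → ℝ | y 0 = 1 ∧ (momentMatrix n γ y).PosSemidef ∧
        ∀ i, (localizingMatrix n (γ - η i) (h i) y).PosSemidef} = ∅ →
      {x' : Fin n → ℝ | ∀ i, 0 ≤ MvPolynomial.eval x' (h i)} = ∅) := by
  have feas : ∀ x' : Fin n → ℝ, (∀ i, 0 ≤ MvPolynomial.eval x' (h i)) →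
      ((fun α : Fin n →₀ ℕ => ∏ i, x' i ^ α i) 0 = 1 ∧
        (momentMatrix n γ (fun α => ∏ i, x' i ^ α i)).PosSemidef ∧
        (∀ i, (localizingMatrix n (γ - η i) (h i) (fun α => ∏ j, x' j ^ α j)).PosSemidef) ∧
        (∑ α ∈ f.support, f.coeff α * ∏ i, x' i ^ α i) = MvPolynomial.eval x' f) := by
    intro x' hx'
    refine ⟨by simp, momentMatrix_psd n γ x',
      fun i => localizingMatrix_psd n (γ - η i) (h i) x' (hx' i), Ly_eq_eval f x'⟩
  have subset : {v : EReal | ∃ x' : Fin n → ℝ,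
        (∀ i, 0 ≤ MvPolynomial.eval x' (h i)) ∧
        v = ((MvPolynomial.eval x' f : ℝ) : EReal)} ⊆
      {v : EReal | ∃ y : (Fin n →₀ ℕ) → ℝ,
        y 0 = 1 ∧ (momentMatrix n γ y).PosSemidef ∧
        (∀ i, (localizingMatrix n (γ - η i) (h i) y).PosSemidef) ∧
        v = ((∑ α ∈ f.support, f.coeff α * y α : ℝ) : EReal)} := by
    rintro v ⟨x', hx', rfl⟩
    obtain ⟨h1, h2, h3, h4⟩ := feas x' hx'
    exact ⟨fun α => ∏ i, x' i ^ α i, h1, h2, h3, by rw [h4]⟩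
  refine ⟨feas x hx, sInf_le_sInf subset, ?_⟩
  intro hEmpty
  rw [Set.eq_empty_iff_forall_notMem]
  intro x' hx'
  obtain ⟨h1, h2, h3, _⟩ := feas x' hx'
  exact Set.eq_empty_iff_forall_notMem.mp hEmpty (fun α => ∏ i, x' i ^ α i) ⟨h1, h2, h3⟩
end

section
/- Let n, γ ∈ ℕ and let z : (Fin n →₀ ℕ) → ℝ satisfy z(0) = 1 and the consistency condition z(α)·z(β) = z(α')·z(β') for all exponent vectors α, β, α', β' with |α|, |β|, |α'|, |β'| ≤ γ and α + β = α' + β'. Then for every exponent vector α with |α| ≤ γ, z(α) = ∏ᵢ z(eᵢ)^{αᵢ}, where eᵢ denotes the exponent vector of the single monomial x_i (i.e., the function sending i to 1 and every other index to 0). In other words, setting xᵢ := z(eᵢ) one has z(α) = x^α for all |α| ≤ γ. -/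
/-- If `z : (Fin n →₀ ℕ) → ℝ` satisfies `z 0 = 1` and the consistency
condition `z α * z β = z α' * z β'` whenever `α + β = α' + β'` (all degrees at most `γ`),
then `z` is multiplicative: `z α = ∏ i, z(eᵢ)^{αᵢ}` for all `|α| ≤ γ`, i.e. `z α = x^α`
for `xᵢ := z (Finsupp.single i 1)`. -/
theorem consistent_moments_are_monomials (n γ : ℕ) (z : (Fin n →₀ ℕ) → ℝ)
    (h0 : z 0 = 1)
    (hcons : ∀ α β α' β' : Fin n →₀ ℕ,
      (∑ i, α i) ≤ γ → (∑ i, β i) ≤ γ → (∑ i, α' i) ≤ γ → (∑ i, β' i) ≤ γ →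
      α + β = α' + β' → z α * z β = z α' * z β') :
    ∀ α : Fin n →₀ ℕ, (∑ i, α i) ≤ γ →
      z α = ∏ i, (z (Finsupp.single i 1)) ^ α i := by
  suffices H : ∀ d : ℕ, ∀ α : Fin n →₀ ℕ, (∑ i, α i) = d → d ≤ γ →
      z α = ∏ i, (z (Finsupp.single i 1)) ^ α i by
    intro α hα
    exact H (∑ i, α i) α rfl hα
  intro d
  induction d using Nat.strong_induction_on with
  | _ d ih =>
    intro α hsum hd
    rcases Nat.eq_zero_or_pos d with hd0 | hdpos
    · subst hd0
      have hα0 : α = 0 := by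
        ext i
        have : α i = 0 := by
          by_contra h
          have : 0 < ∑ j, α j :=
            Finset.sum_pos' (fun j _ => Nat.zero_le _)
              ⟨i, Finset.mem_univ i, Nat.pos_of_ne_zero h⟩
          omega
        simpa using this
      subst hα0
      simp [h0]
    · -- pick i with α i > 0
      have hex : ∃ i, 0 < α i := by
        by_contra h
        push_neg at h
        have : (∑ i, α i) = 0 := Finset.sum_eq_zero (fun i _ => Nat.le_zero.mp (h i))
        omega
      obtain ⟨i, hi⟩ := hex
      set β : Fin n →₀ ℕ := α - Finsupp.single i 1 with hβ
      have hβval : ∀ j, β j = α j - Finsupp.single i 1 j := fun j => rfl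
      have hadd : Finsupp.single i 1 + β = α := by
        ext j
        simp only [Finsupp.add_apply, hβval]
        rcases eq_or_ne j i with rfl | hne
        · simp [Finsupp.single_apply]; omega
        · simp [Finsupp.single_apply, Ne.symm hne]
      have hβsum : (∑ j, β j) = d - 1 := by
        have h1 : (∑ j, ((Finsupp.single i 1 + β : Fin n →₀ ℕ)) j) = ∑ j, α j := by rw [hadd]
        have h2 : (∑ j, ((Finsupp.single i 1 + β : Fin n →₀ ℕ)) j)
            = (∑ j, (Finsupp.single i 1 : Fin n →₀ ℕ) j) + ∑ j, β j := by
          simp [Finsupp.add_apply, Finset.sum_add_distrib]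
        have h3 : (∑ j, (Finsupp.single i 1 : Fin n →₀ ℕ) j) = 1 := by
          simp [Finsupp.single_apply]
        omega
      have hssum : (∑ j, (Finsupp.single i 1 : Fin n →₀ ℕ) j) = 1 := by
        simp [Finsupp.single_apply]
      have h0sum : (∑ j, (0 : Fin n →₀ ℕ) j) = 0 := by simp
      have hc := hcons (Finsupp.single i 1) β α 0
        (by omega) (by omega) (by omega) (by omega) (by rw [hadd]; simp)
      rw [h0, mul_one] at hc
      have hβmul := ih (d - 1) (by omega) β hβsum (by omega)
      rw [← hc, hβmul]
      have : ∀ j, α j = β j + (Finsupp.single i 1 : Fin n →₀ ℕ) j := by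
        intro j; rw [← hadd]; simp [Finsupp.add_apply]; ring
      calc z (Finsupp.single i 1) * ∏ j, z (Finsupp.single j 1) ^ β j
          = (∏ j, z (Finsupp.single j 1) ^ (Finsupp.single i 1 : Fin n →₀ ℕ) j)
            * ∏ j, z (Finsupp.single j 1) ^ β j := by
            congr 1
            rw [Finset.prod_eq_single i]
            · simp
            · intro j _ hj; simp [Finsupp.single_apply, Ne.symm hj]
            · simp
        _ = ∏ j, z (Finsupp.single j 1) ^ α j := by
            rw [← Finset.prod_mul_distrib]
            refine Finset.prod_congr rfl fun j _ => ?_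
            rw [← pow_add, this j]; ring_nf
end

section
/- Let n, γ ∈ ℕ with γ ≥ 1, and let y : (Fin n →₀ ℕ) → ℝ satisfy y(0) = 1. Suppose the order-γ moment matrix M_γ{y} (indexed by {α : |α| ≤ γ} with entries y(α+β)) is positive semidefinite and has rank one. Then there exists x ∈ ℝⁿ such that y(α) = x^α for every exponent vector α with |α| ≤ 2γ. (Every α with |α| ≤ 2γ can be written as α = α' + α'' with |α'|, |α''| ≤ γ, so all such y(α) are entries of M_γ{y}.) -/
open Finset

/-- If `y 0 = 1` and the order-`γ` moment matrix of `y` (with `γ ≥ 1`) is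
positive semidefinite of rank one, then there is a point `x ∈ ℝⁿ` with `y α = x^α` for every
exponent vector `α` of degree at most `2γ`. -/
theorem rank_one_moment_matrix_extraction (n γ : ℕ) (hγ : 1 ≤ γ)
    (y : (Fin n →₀ ℕ) → ℝ) (h0 : y 0 = 1)
    (hpsd : (momentMatrix n γ y).PosSemidef)
    (hrank : (momentMatrix n γ y).rank = 1) :
    ∃ x : Fin n → ℝ, ∀ α : Fin n →₀ ℕ, (∑ i, α i) ≤ 2 * γ →
      y α = ∏ i, x i ^ α i := by
  classical
  set M := momentMatrix n γ y with hM
  set z : MomIdx n γ := ⟨0, by simp⟩ with hz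
  -- the zero column
  have hcol : ∀ q : MomIdx n γ, M.mulVecLin (Pi.single q 1) = fun p => y (p.1 + q.1) := by
    intro q
    funext p
    rw [Matrix.mulVecLin_apply, Matrix.mulVec_single]
    simp [hM, momentMatrix]
  have hc0mem : (fun p : MomIdx n γ => y p.1) ∈ LinearMap.range M.mulVecLin := by
    refine ⟨Pi.single z 1, ?_⟩
    rw [hcol]
    funext p
    simp [hz]
  have hc0ne : (⟨_, hc0mem⟩ : LinearMap.range M.mulVecLin) ≠ 0 := by
    intro h
    have := congrFun (congrArg Subtype.val h) z
    simp [hz, h0] at this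
    exact one_ne_zero this
  have hone := (finrank_eq_one_iff_of_nonzero' _ hc0ne).mp hrank
  -- multiplicativity
  have hmul : ∀ a b : Fin n →₀ ℕ, (∑ i, a i) ≤ γ → (∑ i, b i) ≤ γ →
      y (a + b) = y a * y b := by
    intro a b ha hb
    obtain ⟨cb, hcb⟩ := hone ⟨M.mulVecLin (Pi.single ⟨b, hb⟩ 1), LinearMap.mem_range_self _ _⟩
    have hcb' : cb • (fun p : MomIdx n γ => y p.1) = fun p => y (p.1 + b) := by
      have h := congrArg Subtype.val hcb
      simpa [hcol ⟨b, hb⟩] using h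
    have h1 := congrFun hcb' z
    have h2 := congrFun hcb' ⟨a, ha⟩
    simp only [hz, Subtype.coe_mk, Pi.smul_apply, smul_eq_mul, zero_add] at h1 h2
    have hcbval : cb = y b := by
      have : cb * y ((0 : Fin n →₀ ℕ)) = y b := by
        exact h1
      rw [h0] at this; linarith
    rw [hcbval] at h2
    rw [← h2]; show y b * y a = y a * y b; ring
  set x : Fin n → ℝ := fun i => y (Finsupp.single i 1) with hx
  have hsingle : ∀ i : Fin n, ∑ j, (Finsupp.single i 1 : Fin n →₀ ℕ) j = 1 := by
    intro i
    simp [Finsupp.single_apply]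
  have hprod : ∀ a b : Fin n →₀ ℕ,
      ∏ i, x i ^ (a + b) i = (∏ i, x i ^ a i) * ∏ i, x i ^ b i := by
    intro a b
    simp [Finsupp.add_apply, pow_add, Finset.prod_mul_distrib]
  -- base case: degree ≤ γ
  have hbase : ∀ s : ℕ, ∀ α : Fin n →₀ ℕ, (∑ i, α i) = s → s ≤ γ →
      y α = ∏ i, x i ^ α i := by
    intro s
    induction s with
    | zero =>
      intro α hs _
      have : α = 0 := by
        ext i
        have := Finset.sum_eq_zero_iff.mp hs i (Finset.mem_univ i)
        simpa using this
      subst this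
      simp [h0]
    | succ s ih =>
      intro α hs hsγ
      have : ∃ i, α i ≠ 0 := by
        by_contra h
        push_neg at h
        simp [h] at hs
      obtain ⟨i, hi⟩ := this
      set α' : Fin n →₀ ℕ := α - Finsupp.single i 1 with hα'
      have hdecomp : α = Finsupp.single i 1 + α' := by
        ext j
        simp only [hα', Finsupp.add_apply, Finsupp.tsub_apply, Finsupp.single_apply]
        by_cases hj : i = j
        · subst hj; simp only [if_pos rfl, if_true]; omega
        · simp [hj]
      have hsum' : (∑ j, α' j) = s := by
        have := hs
        rw [hdecomp, Finset.sum_congr rfl (fun j _ => Finsupp.add_apply _ _ j),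
          Finset.sum_add_distrib, hsingle i] at this
        omega
      rw [hdecomp, hmul _ _ (by rw [hsingle]; exact hγ) (by rw [hsum']; omega),
        hprod, ih α' hsum' (by omega)]
      congr 1
      simp [hx, Finsupp.single_apply]
  -- splitting lemma
  have hsplit : ∀ k : ℕ, ∀ α : Fin n →₀ ℕ, k ≤ ∑ i, α i →
      ∃ b : Fin n →₀ ℕ, (∀ i, b i ≤ α i) ∧ (∑ i, b i) = k := by
    intro k
    induction k with
    | zero => intro α _; exact ⟨0, fun i => Nat.zero_le _, by simp⟩
    | succ k ih =>
      intro α hk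
      obtain ⟨b, hb, hbs⟩ := ih α (by omega)
      have : ∃ i, b i < α i := by
        by_contra h
        push_neg at h
        have : (∑ i, α i) ≤ ∑ i, b i := Finset.sum_le_sum fun i _ => h i
        omega
      obtain ⟨i, hi⟩ := this
      refine ⟨b + Finsupp.single i 1, ?_, ?_⟩
      · intro j
        simp only [Finsupp.add_apply, Finsupp.single_apply]
        by_cases hj : i = j
        · subst hj; simpa using hi
        · simp [hj, hb j]
      · rw [Finset.sum_congr rfl (fun j _ => Finsupp.add_apply _ _ j),
          Finset.sum_add_distrib, hbs, hsingle i]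
  refine ⟨x, ?_⟩
  intro α hα
  by_cases hle : (∑ i, α i) ≤ γ
  · exact hbase _ α rfl hle
  · obtain ⟨b, hb, hbs⟩ := hsplit γ α (by omega)
    set a : Fin n →₀ ℕ := α - b with ha
    have hdecomp : α = a + b := by
      ext j
      simp only [ha, Finsupp.add_apply, Finsupp.tsub_apply]
      have := hb j
      omega
    have hsum : (∑ i, α i) = (∑ i, a i) + γ := by
      rw [hdecomp, Finset.sum_congr rfl (fun j _ => Finsupp.add_apply _ _ j),
        Finset.sum_add_distrib, hbs]
    have hha : (∑ i, a i) ≤ γ := by omega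
    rw [hdecomp, hmul a b hha (le_of_eq hbs), hprod,
      hbase _ a rfl hha, hbase _ b hbs le_rfl]
end

section
/- Let n, γ, m ∈ ℕ with γ ≥ 1, let f and h₁, …, h_m be real polynomials in n variables with deg f ≤ 2γ, and for each i let ηᵢ ∈ ℕ satisfy 2ηᵢ ≥ deg hᵢ and γ ≥ ηᵢ. Suppose y : (Fin n →₀ ℕ) → ℝ satisfies: y(0) = 1; the order-γ moment matrix M_γ{y} is positive semidefinite with rank one; and for every i the degree-(γ−ηᵢ) localizing matrix of y for hᵢ is positive semidefinite. Then there exists x ∈ ℝⁿ such that y(α) = x^α for all |α| ≤ 2γ, hᵢ(x) ≥ 0 for all i (i.e., x is feasible for the original polynomial optimization problem), and f(x) = L_y{f} := Σ_α f_α·y(α). -/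
open Finset

-- split lemma
lemma exists_le_sum_eq (n : ℕ) : ∀ (k : ℕ) (α : Fin n →₀ ℕ), k ≤ ∑ i, α i →
    ∃ β : Fin n →₀ ℕ, β ≤ α ∧ ∑ i, β i = k := by
  intro k
  induction k with
  | zero => exact fun α _ => ⟨0, zero_le, by simp⟩
  | succ k ih =>
    intro α hk
    obtain ⟨β, hβle, hβs⟩ := ih α (Nat.le_of_succ_le hk)
    have hne : ∃ i, β i < α i := by
      by_contra hc
      push_neg at hc
      have : ∑ i, α i ≤ ∑ i, β i := Finset.sum_le_sum fun i _ => hc i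
      omega
    obtain ⟨i, hi⟩ := hne
    refine ⟨β + Finsupp.single i 1, ?_, ?_⟩
    · intro j
      simp only [Finsupp.coe_add, Pi.add_apply, Finsupp.single_apply]
      by_cases hj : i = j
      · subst hj; simpa using hi
      · simpa [hj] using hβle j
    · simp [Finsupp.single_apply, Finset.sum_add_distrib, hβs]

/-- If `y` is feasible for the order-`γ` moment relaxation and the moment
matrix has rank one, then the point `x` extracted from `y` (with `y α = x^α` for `|α| ≤ 2γ`)
is feasible for the original polynomial optimization problem and `f(x) = L_y{f}`. -/
theorem rank_one_moment_solution_feasible (n γ m : ℕ) (hγ : 1 ≤ γ)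
    (f : MvPolynomial (Fin n) ℝ) (hf : f.totalDegree ≤ 2 * γ)
    (h : Fin m → MvPolynomial (Fin n) ℝ) (η : Fin m → ℕ)
    (hdeg : ∀ i, (h i).totalDegree ≤ 2 * η i)
    (hγη : ∀ i, η i ≤ γ)
    (y : (Fin n →₀ ℕ) → ℝ) (h0 : y 0 = 1)
    (hpsd : (momentMatrix n γ y).PosSemidef)
    (hrank : (momentMatrix n γ y).rank = 1)
    (hloc : ∀ i, (localizingMatrix n (γ - η i) (h i) y).PosSemidef) :
    ∃ x : Fin n → ℝ,
      (∀ α : Fin n →₀ ℕ, (∑ i, α i) ≤ 2 * γ → y α = ∏ i, x i ^ α i) ∧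
      (∀ i, 0 ≤ MvPolynomial.eval x (h i)) ∧
      MvPolynomial.eval x f = ∑ α ∈ f.support, f.coeff α * y α := by
  classical
  -- multiplicativity from rank one
  have mult : ∀ α β : Fin n →₀ ℕ, (∑ i, α i) ≤ γ → (∑ i, β i) ≤ γ →
      y (α + β) = y α * y β := by
    rw [Matrix.rank] at hrank
    obtain ⟨v, hv0, hv⟩ := finrank_eq_one_iff'.mp hrank
    have hcol : ∀ b, ∃ c : ℝ, ∀ a, momentMatrix n γ y a b = c * (v : _ → ℝ) a := by
      intro b
      obtain ⟨c, hc⟩ := hv ⟨(momentMatrix n γ y).mulVec (Pi.single b 1),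
        LinearMap.mem_range.mpr ⟨Pi.single b 1, rfl⟩⟩
      refine ⟨c, fun a => ?_⟩
      have := congrFun (congrArg Subtype.val hc) a
      simpa [Matrix.mulVec_single] using this.symm
    choose c hc using hcol
    have key : ∀ a b z : MomIdx n γ,
        momentMatrix n γ y a b * momentMatrix n γ y z z
          = momentMatrix n γ y a z * momentMatrix n γ y z b := by
      intro a b z
      rw [hc b a, hc z z, hc z a, hc b z]; ring
    intro α β hα hβ
    have hz : (∑ i, (0 : Fin n →₀ ℕ) i) ≤ γ := by simp
    have := key ⟨α, hα⟩ ⟨β, hβ⟩ ⟨0, hz⟩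
    have h' : y (α + β) * y (0 + 0) = y (α + 0) * y (0 + β) := this
    simpa [h0] using h'
  set x : Fin n → ℝ := fun i => y (Finsupp.single i 1) with hx
  -- base: degree ≤ γ
  have base : ∀ (k : ℕ) (α : Fin n →₀ ℕ), (∑ i, α i) = k → (∑ i, α i) ≤ γ →
      y α = ∏ i, x i ^ α i := by
    intro k
    induction k with
    | zero =>
      intro α hα _
      have : α = 0 := by
        ext i
        exact (Finset.sum_eq_zero_iff.mp hα) i (Finset.mem_univ i)
      subst this
      simp [h0]
    | succ k ih =>
      intro α hα hγα
      have hne : ∃ i, α i ≠ 0 := by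
        by_contra hc
        push_neg at hc
        simp [Finset.sum_eq_zero (fun i _ => hc i)] at hα
      obtain ⟨i, hi⟩ := hne
      have hle : Finsupp.single i 1 ≤ α := by
        intro j
        simp only [Finsupp.single_apply]
        by_cases hj : i = j
        · subst hj; simpa using Nat.one_le_iff_ne_zero.mpr hi
        · simp [hj]
      set α' : Fin n →₀ ℕ := α - Finsupp.single i 1 with hα'
      have hsplit : Finsupp.single i 1 + α' = α := add_tsub_cancel_of_le hle
      have hs1 : (∑ j, (Finsupp.single i 1 : Fin n →₀ ℕ) j) = 1 := by
        simp [Finsupp.single_apply]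
      have hsum' : (∑ j, α' j) = k := by
        have := congrArg (fun β : Fin n →₀ ℕ => ∑ j, β j) hsplit
        simp only [Finsupp.coe_add, Pi.add_apply, Finset.sum_add_distrib] at this
        omega
      have h1 : y α = y (Finsupp.single i 1) * y α' := by
        rw [← hsplit]
        exact mult _ _ (le_trans (le_of_eq hs1) hγ) (by omega)
      rw [h1, ih α' hsum' (by omega)]
      have : ∏ j, x j ^ α j = (∏ j, x j ^ (Finsupp.single i 1 : Fin n →₀ ℕ) j) *
          ∏ j, x j ^ α' j := by
        rw [← Finset.prod_mul_distrib]
        refine Finset.prod_congr rfl fun j _ => ?_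
        rw [← pow_add]
        congr 1
        have := congrFun (congrArg (fun β : Fin n →₀ ℕ => (β : Fin n → ℕ)) hsplit) j
        simpa using this.symm
      rw [this]
      congr 1
      rw [Finset.prod_eq_single i (fun j _ hj => by
        simp [Finsupp.single_apply, Ne.symm hj]) (by simp)]
      simp [hx]
  -- extension: degree ≤ 2γ
  have ext2 : ∀ α : Fin n →₀ ℕ, (∑ i, α i) ≤ 2 * γ → y α = ∏ i, x i ^ α i := by
    intro α hα
    by_cases hle : (∑ i, α i) ≤ γ
    · exact base _ α rfl hle
    · obtain ⟨β, hβle, hβs⟩ := exists_le_sum_eq n ((∑ i, α i) - γ) α (by omega)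
      set δ : Fin n →₀ ℕ := α - β with hδ
      have hsplit : β + δ = α := add_tsub_cancel_of_le hβle
      have hsum : (∑ i, β i) + (∑ i, δ i) = ∑ i, α i := by
        have := congrArg (fun ρ : Fin n →₀ ℕ => ∑ j, ρ j) hsplit
        simpa [Finset.sum_add_distrib] using this
      have hβγ : (∑ i, β i) ≤ γ := by omega
      have hδγ : (∑ i, δ i) ≤ γ := by omega
      rw [← hsplit, mult _ _ hβγ hδγ, base _ β rfl hβγ, base _ δ rfl hδγ,
        ← Finset.prod_mul_distrib]
      exact Finset.prod_congr rfl fun j _ => by rw [← pow_add]; rfl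
  refine ⟨x, ext2, ?_, ?_⟩
  · intro i
    have hz : (∑ j, (0 : Fin n →₀ ℕ) j) ≤ γ - η i := by simp
    have hd := (hloc i).dotProduct_mulVec_nonneg (Pi.single ⟨0, hz⟩ 1)
    have heq : MvPolynomial.eval x (h i) = localizingMatrix n (γ - η i) (h i) y ⟨0, hz⟩ ⟨0, hz⟩ := by
      rw [MvPolynomial.eval_eq']
      simp only [localizingMatrix, Matrix.of_apply, add_zero]
      refine Finset.sum_congr rfl fun κ hκ => ?_
      congr 1
      change _ = y (κ + 0 + 0)
      rw [add_zero, add_zero]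
      refine (ext2 κ ?_).symm
      have h1 : (κ.sum fun _ e => e) ≤ (h i).totalDegree := MvPolynomial.le_totalDegree hκ
      have h2 : (∑ j, κ j) = κ.sum fun _ e => e :=
        (Finsupp.sum_fintype κ (fun _ e => e) (fun _ => rfl)).symm
      have := hdeg i; have := hγη i
      omega
    rw [heq]
    exact (hloc i).diag_nonneg
  · rw [MvPolynomial.eval_eq']
    refine Finset.sum_congr rfl fun α hα => ?_
    congr 1
    refine (ext2 α ?_).symm
    have h1 : (α.sum fun _ e => e) ≤ f.totalDegree := MvPolynomial.le_totalDegree hα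
    have h2 : (∑ j, α j) = α.sum fun _ e => e := (Finsupp.sum_fintype α (fun _ e => e) (fun _ => rfl)).symm
    omega
end

section
/- Let n, γ, m ∈ ℕ with γ ≥ 1, let f and h₁, …, h_m be real polynomials in n variables with deg f ≤ 2γ, and for each i let ηᵢ ∈ ℕ satisfy 2ηᵢ ≥ deg hᵢ and γ ≥ ηᵢ. Suppose y : (Fin n →₀ ℕ) → ℝ satisfies the order-γ moment relaxation constraints (y(0) = 1, M_γ{y} ⪰ 0, and all degree-(γ−ηᵢ) localizing matrices of y for hᵢ positive semidefinite), that rank(M_γ{y}) = 1, and moreover that L_y{f} ≤ f(x') for every x' ∈ ℝⁿ with hᵢ(x') ≥ 0 for all i (i.e., y is optimal for the relaxation). Then the point x ∈ ℝⁿ recovered from y (satisfying y(α) = x^α for |α| ≤ 2γ) is a global minimizer of the original problem: hᵢ(x) ≥ 0 for all i, and f(x) ≤ f(x') for every x' with hᵢ(x') ≥ 0 for all i. -/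
open Finset
open scoped Matrix

/-- If `y` is feasible for the order-`γ` moment relaxation, its moment matrix
has rank one, and `y` is optimal for the relaxation (`L_y{f} ≤ f(x')` for every feasible `x'`),
then the point `x` recovered from `y` is a global minimizer of the original problem. -/

theorem rank_one_optimal_moment_solution_global (n γ m : ℕ) (hγ : 1 ≤ γ)
    (f : MvPolynomial (Fin n) ℝ) (hf : f.totalDegree ≤ 2 * γ)
    (h : Fin m → MvPolynomial (Fin n) ℝ) (η : Fin m → ℕ)
    (hdeg : ∀ i, (h i).totalDegree ≤ 2 * η i)
    (hγη : ∀ i, η i ≤ γ)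
    (y : (Fin n →₀ ℕ) → ℝ) (h0 : y 0 = 1)
    (hpsd : (momentMatrix n γ y).PosSemidef)
    (hrank : (momentMatrix n γ y).rank = 1)
    (hloc : ∀ i, (localizingMatrix n (γ - η i) (h i) y).PosSemidef)
    (hopt : ∀ x' : Fin n → ℝ, (∀ i, 0 ≤ MvPolynomial.eval x' (h i)) →
      (∑ α ∈ f.support, f.coeff α * y α) ≤ MvPolynomial.eval x' f) :
    ∃ x : Fin n → ℝ,
      (∀ α : Fin n →₀ ℕ, (∑ i, α i) ≤ 2 * γ → y α = ∏ i, x i ^ α i) ∧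
      (∀ i, 0 ≤ MvPolynomial.eval x (h i)) ∧
      (∀ x' : Fin n → ℝ, (∀ i, 0 ≤ MvPolynomial.eval x' (h i)) →
        MvPolynomial.eval x f ≤ MvPolynomial.eval x' f) := by
  classical
  set M := momentMatrix n γ y with hM
  have hMab : ∀ a b : MomIdx n γ, M a b = y (a.1 + b.1) := fun a b => rfl
  -- the zero index
  have hz : (∑ i, (0 : Fin n →₀ ℕ) i) ≤ γ := by simp
  set a₀ : MomIdx n γ := ⟨0, hz⟩ with ha₀
  -- columns of M
  have colmem : ∀ b : MomIdx n γ, (fun a => M a b) ∈ LinearMap.range M.mulVecLin := by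
    intro b
    refine ⟨Pi.single b 1, ?_⟩
    rw [Matrix.mulVecLin_apply, Matrix.mulVec_single]
    funext a; simp
  have hv0 : (fun a => M a a₀) ≠ 0 := by
    intro hcon
    have := congrFun hcon a₀
    rw [hMab] at this
    simp [ha₀, h0] at this
  have hspan : Submodule.span ℝ {(fun a => M a a₀)} = LinearMap.range M.mulVecLin := by
    apply Submodule.eq_of_le_of_finrank_le
    · rw [Submodule.span_singleton_le_iff_mem]; exact colmem a₀
    · rw [finrank_span_singleton hv0]
      exact le_of_eq hrank
  -- multiplicativity of y on low degrees
  have key : ∀ a b : Fin n →₀ ℕ, (∑ i, a i) ≤ γ → (∑ i, b i) ≤ γ →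
      y (a + b) = y a * y b := by
    intro a b ha hb
    have hcol := colmem ⟨b, hb⟩
    rw [← hspan, Submodule.mem_span_singleton] at hcol
    obtain ⟨c, hc⟩ := hcol
    have h1 := congrFun hc a₀
    have h2 := congrFun hc ⟨a, ha⟩
    simp only [Pi.smul_apply, smul_eq_mul, hMab] at h1 h2
    simp only [ha₀, zero_add, add_zero, h0, mul_one] at h1 h2
    have h1' : c = y b := h1.trans ((hMab _ _).trans (congrArg y (zero_add b)))
    have h2' : c * y a = y (a + b) := h2.trans (hMab _ _)
    rw [← h2', h1', mul_comm]
  -- the recovered point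
  set x : Fin n → ℝ := fun i => y (Finsupp.single i 1) with hx
  have hsing : ∀ i : Fin n, (∑ j, (Finsupp.single i 1 : Fin n →₀ ℕ) j) = 1 := by
    intro i; simp [Finsupp.single_apply]
  have hprodsing : ∀ i : Fin n, (∏ j, x j ^ (Finsupp.single i 1 : Fin n →₀ ℕ) j) = x i := by
    intro i
    rw [Finset.prod_eq_single i]
    · simp
    · intro j _ hj; simp [Finsupp.single_apply, Ne.symm hj]
    · simp
  -- y equals monomials up to degree γ
  have pow1 : ∀ (s : ℕ) (α : Fin n →₀ ℕ), (∑ i, α i) = s → s ≤ γ →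
      y α = ∏ i, x i ^ α i := by
    intro s
    induction s with
    | zero =>
      intro α hα _
      have : α = 0 := by
        ext i
        exact Finset.sum_eq_zero_iff.mp hα i (Finset.mem_univ i)
      subst this
      simp [h0]
    | succ s ih =>
      intro α hα hs
      have hex : ∃ i, 0 < α i := by
        by_contra hcon
        push_neg at hcon
        have : (∑ i, α i) = 0 := Finset.sum_eq_zero fun i _ => Nat.le_zero.mp (hcon i)
        omega
      obtain ⟨i, hi⟩ := hex
      have hle : (Finsupp.single i 1 : Fin n →₀ ℕ) ≤ α := Finsupp.single_le_iff.mpr hi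
      set β : Fin n →₀ ℕ := α - Finsupp.single i 1 with hβ
      have hadd : β + Finsupp.single i 1 = α := tsub_add_cancel_of_le hle
      have hsum : (∑ j, β j) = s := by
        have := congrArg (fun g : Fin n →₀ ℕ => ∑ j, g j) hadd
        simp only [Finsupp.add_apply, Finset.sum_add_distrib, hsing i] at this
        omega
      have hyβ := ih β hsum (by omega)
      calc y α = y (β + Finsupp.single i 1) := by rw [hadd]
        _ = y β * y (Finsupp.single i 1) := key _ _ (by omega) (by rw [hsing]; omega)
        _ = (∏ j, x j ^ β j) * x i := by rw [hyβ]
        _ = (∏ j, x j ^ β j) * ∏ j, x j ^ (Finsupp.single i 1 : Fin n →₀ ℕ) j := by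
            rw [hprodsing]
        _ = ∏ j, x j ^ α j := by
            rw [← Finset.prod_mul_distrib]
            refine Finset.prod_congr rfl fun j _ => ?_
            rw [← pow_add, ← Finsupp.add_apply, hadd]
  -- splitting lemma
  have split : ∀ (k : ℕ) (α : Fin n →₀ ℕ), k ≤ ∑ i, α i →
      ∃ β : Fin n →₀ ℕ, β ≤ α ∧ (∑ i, β i) = k := by
    intro k
    induction k with
    | zero => exact fun α _ => ⟨0, zero_le, by simp⟩
    | succ k ih =>
      intro α hk
      obtain ⟨β, hβle, hβs⟩ := ih α (by omega)
      have hex : ∃ i, β i < α i := by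
        by_contra hcon
        push_neg at hcon
        have : (∑ i, α i) ≤ ∑ i, β i := Finset.sum_le_sum fun i _ => hcon i
        omega
      obtain ⟨i, hi⟩ := hex
      refine ⟨β + Finsupp.single i 1, ?_, ?_⟩
      · rw [Finsupp.le_def]
        intro j
        rcases eq_or_ne j i with rfl | hne
        · simpa [Finsupp.single_apply] using hi
        · simpa [Finsupp.single_apply, Ne.symm hne] using Finsupp.le_def.mp hβle j
      · simp only [Finsupp.add_apply, Finset.sum_add_distrib, hβs, hsing i]
  -- y equals monomials up to degree 2γ
  have pow2 : ∀ α : Fin n →₀ ℕ, (∑ i, α i) ≤ 2 * γ → y α = ∏ i, x i ^ α i := by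
    intro α hα
    rcases le_or_gt (∑ i, α i) γ with hle | hlt
    · exact pow1 _ α rfl hle
    · obtain ⟨β, hβle, hβs⟩ := split γ α (le_of_lt hlt)
      set δ : Fin n →₀ ℕ := α - β with hδ
      have hadd : β + δ = α := by
        rw [hδ, add_comm]; exact tsub_add_cancel_of_le hβle
      have hsum : (∑ j, β j) + (∑ j, δ j) = ∑ j, α j := by
        have := congrArg (fun g : Fin n →₀ ℕ => ∑ j, g j) hadd
        simpa [Finsupp.add_apply, Finset.sum_add_distrib] using this
      have hδs : (∑ j, δ j) ≤ γ := by omega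
      calc y α = y (β + δ) := by rw [hadd]
        _ = y β * y δ := key _ _ (by omega) hδs
        _ = (∏ j, x j ^ β j) * ∏ j, x j ^ δ j := by
            rw [pow1 _ β rfl (by omega), pow1 _ δ rfl hδs]
        _ = ∏ j, x j ^ α j := by
            rw [← Finset.prod_mul_distrib]
            refine Finset.prod_congr rfl fun j _ => ?_
            rw [← pow_add, ← Finsupp.add_apply, hadd]
  -- degree bounds from support membership
  have hsupp : ∀ (p : MvPolynomial (Fin n) ℝ) (κ : Fin n →₀ ℕ), κ ∈ p.support →
      (∑ i, κ i) ≤ p.totalDegree := by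
    intro p κ hκ
    have := MvPolynomial.le_totalDegree hκ
    rwa [Finsupp.sum_fintype _ _ (fun _ => rfl)] at this
  -- feasibility of x
  have hfeas : ∀ i, 0 ≤ MvPolynomial.eval x (h i) := by
    intro i
    have hz' : (∑ j, (0 : Fin n →₀ ℕ) j) ≤ γ - η i := by simp
    set z : MomIdx n (γ - η i) := ⟨0, hz'⟩ with hzdef
    have hq := (hloc i).dotProduct_mulVec_nonneg (Pi.single z 1)
    have hMz : (localizingMatrix n (γ - η i) (h i) y) *ᵥ Pi.single z 1 =
        fun a => (localizingMatrix n (γ - η i) (h i) y) a z * 1 :=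
      Matrix.mulVec_single _ _ _
    rw [hMz] at hq
    have hq2 : (0:ℝ) ≤ (localizingMatrix n (γ - η i) (h i) y) z z := by
      simpa [dotProduct, Pi.single_apply] using hq
    have hentry : (localizingMatrix n (γ - η i) (h i) y) z z =
        MvPolynomial.eval x (h i) := by
      show (∑ κ ∈ (h i).support, (h i).coeff κ * y (κ + z.1 + z.1)) = _
      rw [MvPolynomial.eval_eq']
      refine Finset.sum_congr rfl fun κ hκ => ?_
      have hκd : (∑ j, κ j) ≤ 2 * γ := by
        have h1 := hsupp _ _ hκ
        have h2 := hdeg i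
        have h3 := hγη i
        omega
      rw [hzdef]
      simp only [add_zero]
      rw [pow2 κ hκd]
    linarith [hq2, le_of_eq hentry]
  -- L_y f = f(x)
  have hLy : (∑ α ∈ f.support, f.coeff α * y α) = MvPolynomial.eval x f := by
    rw [MvPolynomial.eval_eq']
    refine Finset.sum_congr rfl fun α hα => ?_
    rw [pow2 α ((hsupp _ _ hα).trans hf)]
  refine ⟨x, pow2, hfeas, fun x' hx' => ?_⟩
  rw [← hLy]
  exact hopt x' hx'
end
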